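/- The map g = f₀ ∘ h is a continuous bijection from Ξ onto ℂ₊ \ {u₀}; it maps the interior of Ξ homeomorphically onto ℂ₊ \ (Γ_{π/2} ∪ {u₀}), where Γ_{π/2} = {g(π/2, ξ) : ξ < −π/2}, and this image is an open, simply connected subset of ℂ. -/

import Mathlib

/-- The point `u₀ = (1 + √3 i)/2`. -/
noncomputable def u0 : ℂ := (1 + Real.sqrt 3 * Complex.I) / 2

/-- The map `h(η, ξ) = exp(−√3(η + ξ) + iξ)`. -/
noncomputable def hfun (p : ℝ × ℝ) : ℂ :=
  Complex.exp ((-(Real.sqrt 3) * (p.1 + p.2) : ℝ) + Complex.I * (p.2 : ℂ))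

/-- The map `f₀(v) = √3 i (v − 1)/(1 − |v|²) + u₀`. -/
noncomputable def f0 (v : ℂ) : ℂ :=
  (Real.sqrt 3 : ℝ) * Complex.I * (v - 1) / (1 - ((‖v‖ : ℝ) : ℂ) ^ 2) + u0

/-- The map `g = f₀ ∘ h`. -/
noncomputable def gfun (p : ℝ × ℝ) : ℂ := f0 (hfun p)

/-- The trapezoid `Ξ = {(η, ξ) : −3π/2 < η ≤ π/2, ξ < −η}`. -/
def Xi : Set (ℝ × ℝ) :=
  {p : ℝ × ℝ | -(3 * Real.pi / 2) < p.1 ∧ p.1 ≤ Real.pi / 2 ∧ p.2 < -p.1}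

/-- The interior of the trapezoid `Ξ`. -/
def XiInt : Set (ℝ × ℝ) :=
  {p : ℝ × ℝ | -(3 * Real.pi / 2) < p.1 ∧ p.1 < Real.pi / 2 ∧ p.2 < -p.1}

/-- The curve `Γ_{π/2} = {g(π/2, ξ) : ξ < −π/2}`. -/
noncomputable def GammaHalfPi : Set ℂ :=
  (fun ξ : ℝ => gfun (Real.pi / 2, ξ)) '' Set.Iio (-(Real.pi / 2))

/-!
The map `h` factors as `conj ∘ twist θ ∘ exp ∘ A` with `θ = spiralAngle` and `A = toStrip`: the
affine map `A` sends `Ξ` onto the half-strip `{0 < Re w, −π < Im w ≤ π}`, on which the principal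
`log` inverts `exp`, and `twist θ v = v e^{iθ(|v|)}` preserves `|v|`, with inverse `twist (−θ)`.
The conjugation orients the strip so that the edge `η = π/2` lands on `Im w = π`, which the
principal branch still covers. With the explicit inverse of `f₀` this yields an inverse of `g`
on all of `ℂ₊ \ {u₀}`. The interior of `Ξ` corresponds to the points whose `exp`-coordinate lies
in the slit plane, where `log` is continuous, so `g` restricts to a homeomorphism from the convex
set `int Ξ` onto an open set.
-/

open Complex ComplexConjugate Set

noncomputable def twist (θ : ℝ → ℝ) (z : ℂ) : ℂ := z * exp (θ ‖z‖ * I)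

section twist

variable (θ : ℝ → ℝ) (z : ℂ)

@[simp]
lemma norm_twist : ‖twist θ z‖ = ‖z‖ := by
  rw [twist, norm_mul, norm_exp_ofReal_mul_I, mul_one]

lemma twist_neg_twist : twist (-θ) (twist θ z) = z := by
  rw [twist, norm_twist, twist, mul_assoc, ← exp_add, Pi.neg_apply, ofReal_neg, neg_mul,
    add_neg_cancel, exp_zero, mul_one]

lemma twist_twist_neg : twist θ (twist (-θ) z) = z := by
  simpa using twist_neg_twist (-θ) z

end twist

lemma continuousOn_twist {θ : ℝ → ℝ} (hθ : ContinuousOn θ {0}ᶜ) :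
    ContinuousOn (twist θ) {0}ᶜ := by
  refine continuousOn_id.mul (continuous_exp.comp_continuousOn
    ((continuous_ofReal.comp_continuousOn (hθ.comp continuous_norm.continuousOn ?_)).mul
      continuousOn_const))
  intro z hz
  simpa using hz

def halfStrip : Set ℂ := {w | 0 < w.re ∧ w.im ∈ Ioc (-Real.pi) Real.pi}

lemma log_mem_halfStrip {z : ℂ} (hz : 1 < ‖z‖) : log z ∈ halfStrip := by
  refine ⟨?_, ?_⟩
  · rw [log_re]
    exact Real.log_pos hz
  · rw [log_im]
    exact ⟨neg_pi_lt_arg z, arg_le_pi z⟩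

lemma exp_mem_slitPlane_iff_im_ne_pi {w : ℂ} (hw : w.im ∈ Ioc (-Real.pi) Real.pi) :
    exp w ∈ slitPlane ↔ w.im ≠ Real.pi := by
  rw [exp_mem_slitPlane, (toIocMod_eq_self _).2]
  rwa [show -Real.pi + 2 * Real.pi = Real.pi by ring]

noncomputable def spiralAngle (r : ℝ) : ℝ := Real.log r / √3 - Real.pi / 2

noncomputable def toStrip (p : ℝ × ℝ) : ℂ :=
  ((-(√3) * (p.1 + p.2) : ℝ) : ℂ) + ((p.1 + Real.pi / 2 : ℝ) : ℂ) * I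

noncomputable def ofStrip (w : ℂ) : ℝ × ℝ :=
  (w.im - Real.pi / 2, -(w.re / √3) - w.im + Real.pi / 2)

@[simp] lemma toStrip_re (p : ℝ × ℝ) : (toStrip p).re = -(√3) * (p.1 + p.2) := by simp [toStrip]
@[simp] lemma toStrip_im (p : ℝ × ℝ) : (toStrip p).im = p.1 + Real.pi / 2 := by simp [toStrip]

lemma ofStrip_toStrip (p : ℝ × ℝ) : ofStrip (toStrip p) = p := by
  have : √3 ≠ 0 := by positivity
  ext
  · simp [ofStrip]
  · simp [ofStrip]
    field_simp
    ring

lemma toStrip_ofStrip (w : ℂ) : toStrip (ofStrip w) = w := by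
  have : √3 ≠ 0 := by positivity
  apply Complex.ext
  · simp [ofStrip]
    field_simp
  · simp [ofStrip]

lemma mem_Xi_iff_toStrip_mem_halfStrip (p : ℝ × ℝ) : p ∈ Xi ↔ toStrip p ∈ halfStrip := by
  have : 0 < √3 := by positivity
  simp only [Xi, halfStrip, mem_ofPred_eq, toStrip_re, toStrip_im, mem_Ioc]
  constructor
  · rintro ⟨h1, h2, h3⟩
    refine ⟨by nlinarith, by linarith, by linarith⟩
  · rintro ⟨h1, h2, h3⟩
    refine ⟨by linarith, by linarith, by nlinarith⟩

lemma hfun_eq_conj_twist_exp (p : ℝ × ℝ) :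
    hfun p = conj (twist spiralAngle (exp (toStrip p))) := by
  have : √3 ≠ 0 := by positivity
  rw [hfun, twist, norm_exp, ← exp_add, ← exp_conj]
  congr 1
  simp only [toStrip, map_add, map_mul, conj_ofReal, conj_I]
  apply Complex.ext
  · simp
  · simp [spiralAngle]
    field_simp
    ring

/-- Solving `f₀ v = u` gives `v = 1 + s·i(u − u₀)` with `s = (|v|² − 1)/√3`, and then
`norm_one_add_mul_I_mul_sub_u0_sq` forces `s = 2 Im u / |u − u₀|²`. -/
noncomputable def f0Inv (u : ℂ) : ℂ := 1 + ((2 * u.im / ‖u - u0‖ ^ 2 : ℝ) : ℂ) * (I * (u - u0))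

lemma norm_one_add_mul_I_mul_sub_u0_sq (s : ℝ) (u : ℂ) :
    ‖1 + s * (I * (u - u0))‖ ^ 2 = 1 + s * (s * ‖u - u0‖ ^ 2 - 2 * u.im + √3) := by
  simp only [Complex.sq_norm, normSq_apply]
  simp [u0]
  ring

lemma one_add_mul_I_mul_f0_sub_u0 {v : ℂ} (hv : ‖v‖ ≠ 1) :
    1 + (((‖v‖ ^ 2 - 1) / √3 : ℝ) : ℂ) * (I * (f0 v - u0)) = v := by
  have h3 : (√3 : ℂ) ≠ 0 := by exact_mod_cast (show √3 ≠ 0 by positivity)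
  have hd : (1 : ℂ) - (‖v‖ : ℂ) ^ 2 ≠ 0 := by
    exact_mod_cast (show 1 - ‖v‖ ^ 2 ≠ 0 by
      intro h; exact hv (by nlinarith [norm_nonneg v]))
  rw [f0, add_sub_cancel_right]
  push_cast
  field_simp
  linear_combination ((‖v‖ : ℂ) ^ 2 - 1) * (v - 1) * I_sq

lemma f0_one_add_mul_I_mul_sub_u0 {s : ℝ} (hs : s ≠ 0) {u : ℂ}
    (h : ‖1 + s * (I * (u - u0))‖ ^ 2 = 1 + √3 * s) : f0 (1 + s * (I * (u - u0))) = u := by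
  have h3 : (√3 : ℂ) ≠ 0 := by exact_mod_cast (show √3 ≠ 0 by positivity)
  have hs' : (s : ℂ) ≠ 0 := by exact_mod_cast hs
  rw [f0, ← ofReal_pow, h]
  push_cast
  field_simp
  linear_combination ((√3 : ℂ) * s * (u - u0)) * I_sq

lemma mul_norm_f0_sub_u0_sq {v : ℂ} (hv : 1 < ‖v‖) :
    (‖v‖ ^ 2 - 1) / √3 * ‖f0 v - u0‖ ^ 2 = 2 * (f0 v).im := by
  set s := (‖v‖ ^ 2 - 1) / √3 with hs_def
  have hs : s ≠ 0 := by
    have : 1 < ‖v‖ ^ 2 := by nlinarith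
    positivity
  have hnorm := norm_one_add_mul_I_mul_sub_u0_sq s (f0 v)
  rw [one_add_mul_I_mul_f0_sub_u0 hv.ne'] at hnorm
  have hv2 : ‖v‖ ^ 2 = 1 + √3 * s := by
    rw [hs_def]
    field_simp
    ring
  refine (mul_left_cancel₀ hs ?_).symm
  linear_combination hnorm - hv2

lemma f0_ne_u0 {v : ℂ} (hv : 1 < ‖v‖) : f0 v ≠ u0 := by
  intro h
  have hv1 := one_add_mul_I_mul_f0_sub_u0 hv.ne'
  rw [h, sub_self, mul_zero, mul_zero, add_zero] at hv1
  simp [← hv1] at hv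

lemma mapsTo_f0 : MapsTo f0 {v | 1 < ‖v‖} ({u | 0 < u.im} \ {u0}) := by
  intro v (hv : 1 < ‖v‖)
  have hne := f0_ne_u0 hv
  have : 0 < (‖v‖ ^ 2 - 1) / √3 * ‖f0 v - u0‖ ^ 2 := by
    have : 1 < ‖v‖ ^ 2 := by nlinarith
    have : 0 < ‖f0 v - u0‖ := norm_pos_iff.2 (sub_ne_zero.2 hne)
    positivity
  refine ⟨?_, hne⟩
  show 0 < (f0 v).im
  linarith [mul_norm_f0_sub_u0_sq hv]

lemma f0Inv_f0 {v : ℂ} (hv : 1 < ‖v‖) : f0Inv (f0 v) = v := by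
  have hN : ‖f0 v - u0‖ ^ 2 ≠ 0 := by simpa [sub_eq_zero] using f0_ne_u0 hv
  rw [f0Inv, ← mul_norm_f0_sub_u0_sq hv, mul_div_cancel_right₀ _ hN,
    one_add_mul_I_mul_f0_sub_u0 hv.ne']

lemma norm_f0Inv_sq {u : ℂ} (hu : u ≠ u0) :
    ‖f0Inv u‖ ^ 2 = 1 + √3 * (2 * u.im / ‖u - u0‖ ^ 2) := by
  have hN : ‖u - u0‖ ^ 2 ≠ 0 := by simpa [sub_eq_zero] using hu
  rw [f0Inv, norm_one_add_mul_I_mul_sub_u0_sq, div_mul_cancel₀ _ hN]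
  ring

lemma f0_f0Inv {u : ℂ} (hu : u ∈ {u : ℂ | 0 < u.im} \ {u0}) : f0 (f0Inv u) = u := by
  have hN : 0 < ‖u - u0‖ ^ 2 := pow_pos (norm_pos_iff.2 (sub_ne_zero.2 hu.2)) 2
  have hs : 2 * u.im / ‖u - u0‖ ^ 2 ≠ 0 := (div_pos (by linarith [hu.1.out]) hN).ne'
  exact f0_one_add_mul_I_mul_sub_u0 hs (norm_f0Inv_sq hu.2)

lemma one_lt_norm_f0Inv {u : ℂ} (hu : u ∈ {u : ℂ | 0 < u.im} \ {u0}) : 1 < ‖f0Inv u‖ := by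
  have hN : 0 < ‖u - u0‖ ^ 2 := pow_pos (norm_pos_iff.2 (sub_ne_zero.2 hu.2)) 2
  have h2 : 1 < ‖f0Inv u‖ ^ 2 := by
    rw [norm_f0Inv_sq hu.2]
    have : 0 < 2 * u.im / ‖u - u0‖ ^ 2 := div_pos (by linarith [hu.1.out]) hN
    have : 0 < √3 := by positivity
    nlinarith
  nlinarith [norm_nonneg (f0Inv u)]

lemma continuousOn_f0 : ContinuousOn f0 {v | 1 < ‖v‖} := by
  refine ContinuousOn.add (ContinuousOn.div (by fun_prop) (by fun_prop) ?_) continuousOn_const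
  intro v (hv : 1 < ‖v‖)
  exact_mod_cast (show 1 - ‖v‖ ^ 2 ≠ 0 by nlinarith)

lemma continuousOn_f0Inv : ContinuousOn f0Inv {u0}ᶜ := by
  refine continuousOn_const.add (ContinuousOn.mul ?_ (by fun_prop))
  refine continuous_ofReal.comp_continuousOn (ContinuousOn.div (by fun_prop) (by fun_prop) ?_)
  intro u hu
  simpa [sub_eq_zero] using hu

noncomputable def untwist (u : ℂ) : ℂ := twist (-spiralAngle) (conj (f0Inv u))

noncomputable def gInv (u : ℂ) : ℝ × ℝ := ofStrip (log (untwist u))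

lemma one_lt_norm_hfun {p : ℝ × ℝ} (hp : p ∈ Xi) : 1 < ‖hfun p‖ := by
  rw [hfun_eq_conj_twist_exp, norm_conj, norm_twist, norm_exp]
  exact Real.one_lt_exp_iff.2 ((mem_Xi_iff_toStrip_mem_halfStrip p).1 hp).1

lemma mapsTo_gfun : MapsTo gfun Xi ({u : ℂ | 0 < u.im} \ {u0}) :=
  fun _ hp => mapsTo_f0 (one_lt_norm_hfun hp)

lemma continuousOn_gfun : ContinuousOn gfun Xi :=
  continuousOn_f0.comp (by unfold hfun; fun_prop) fun _ hp => one_lt_norm_hfun hp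

lemma untwist_gfun {p : ℝ × ℝ} (hp : p ∈ Xi) : untwist (gfun p) = exp (toStrip p) := by
  rw [untwist, gfun, f0Inv_f0 (one_lt_norm_hfun hp), hfun_eq_conj_twist_exp, conj_conj,
    twist_neg_twist]

lemma one_lt_norm_untwist {u : ℂ} (hu : u ∈ {u : ℂ | 0 < u.im} \ {u0}) : 1 < ‖untwist u‖ := by
  rw [untwist, norm_twist, norm_conj]
  exact one_lt_norm_f0Inv hu

lemma gInv_gfun {p : ℝ × ℝ} (hp : p ∈ Xi) : gInv (gfun p) = p := by
  obtain ⟨-, him⟩ := (mem_Xi_iff_toStrip_mem_halfStrip p).1 hp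
  rw [gInv, untwist_gfun hp, log_exp him.1 him.2, ofStrip_toStrip]

lemma gfun_gInv {u : ℂ} (hu : u ∈ {u : ℂ | 0 < u.im} \ {u0}) : gfun (gInv u) = u := by
  have hne : untwist u ≠ 0 := norm_pos_iff.1 (one_pos.trans (one_lt_norm_untwist hu))
  rw [gfun, hfun_eq_conj_twist_exp, gInv, toStrip_ofStrip, exp_log hne, untwist,
    twist_twist_neg, conj_conj, f0_f0Inv hu]

lemma mapsTo_gInv : MapsTo gInv ({u : ℂ | 0 < u.im} \ {u0}) Xi := by
  intro u hu
  rw [mem_Xi_iff_toStrip_mem_halfStrip, gInv, toStrip_ofStrip]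
  exact log_mem_halfStrip (one_lt_norm_untwist hu)

lemma bijOn_gfun : BijOn gfun Xi ({u : ℂ | 0 < u.im} \ {u0}) :=
  InvOn.bijOn ⟨fun _ hp => gInv_gfun hp, fun _ hu => gfun_gInv hu⟩ mapsTo_gfun mapsTo_gInv

lemma XiInt_subset_Xi : XiInt ⊆ Xi := fun _ hp => ⟨hp.1, hp.2.1.le, hp.2.2⟩

lemma mem_XiInt_iff_fst_ne {p : ℝ × ℝ} (hp : p ∈ Xi) : p ∈ XiInt ↔ p.1 ≠ Real.pi / 2 := by
  obtain ⟨h1, h2, h3⟩ := hp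
  exact ⟨fun h => h.2.1.ne, fun h => ⟨h1, lt_of_le_of_ne h2 h, h3⟩⟩

lemma Xi_sdiff_XiInt : Xi \ XiInt = (fun ξ : ℝ => (Real.pi / 2, ξ)) '' Iio (-(Real.pi / 2)) := by
  ext p
  constructor
  · rintro ⟨hp, hint⟩
    have hη : p.1 = Real.pi / 2 := not_not.1 ((mem_XiInt_iff_fst_ne hp).not.1 hint)
    refine ⟨p.2, ?_, Prod.ext hη.symm rfl⟩
    simpa [mem_Iio, hη] using hp.2.2
  · rintro ⟨ξ, hξ, rfl⟩
    have hp : (Real.pi / 2, ξ) ∈ Xi := ⟨by linarith [Real.pi_pos], le_rfl, hξ⟩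
    exact ⟨hp, fun h => (mem_XiInt_iff_fst_ne hp).1 h rfl⟩

lemma GammaHalfPi_eq_gfun_image : GammaHalfPi = gfun '' (Xi \ XiInt) := by
  rw [Xi_sdiff_XiInt, image_image]
  rfl

lemma mem_XiInt_iff_untwist_gfun_mem_slitPlane {p : ℝ × ℝ} (hp : p ∈ Xi) :
    p ∈ XiInt ↔ untwist (gfun p) ∈ slitPlane := by
  rw [mem_XiInt_iff_fst_ne hp, untwist_gfun hp,
    exp_mem_slitPlane_iff_im_ne_pi ((mem_Xi_iff_toStrip_mem_halfStrip p).1 hp).2, toStrip_im]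
  constructor <;> intro h h' <;> apply h <;> linarith

lemma gfun_image_XiInt :
    gfun '' XiInt = ({u : ℂ | 0 < u.im} \ {u0}) ∩ untwist ⁻¹' slitPlane := by
  ext u
  constructor
  · rintro ⟨p, hp, rfl⟩
    have hpXi := XiInt_subset_Xi hp
    exact ⟨mapsTo_gfun hpXi, (mem_XiInt_iff_untwist_gfun_mem_slitPlane hpXi).1 hp⟩
  · rintro ⟨hu, hslit⟩
    refine ⟨gInv u, ?_, gfun_gInv hu⟩
    rwa [mem_XiInt_iff_untwist_gfun_mem_slitPlane (mapsTo_gInv hu), gfun_gInv hu]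

lemma upperHalfPlane_diff_eq_gfun_image_XiInt :
    {u : ℂ | 0 < u.im} \ (GammaHalfPi ∪ {u0}) = gfun '' XiInt := by
  rw [GammaHalfPi_eq_gfun_image, union_comm, ← sdiff_sdiff, ← bijOn_gfun.image_eq,
    ← bijOn_gfun.injOn.image_sdiff_subset sdiff_subset, sdiff_sdiff_cancel_left XiInt_subset_Xi]

lemma continuousOn_untwist : ContinuousOn untwist ({u : ℂ | 0 < u.im} \ {u0}) := by
  have hθ : ContinuousOn (-spiralAngle) {0}ᶜ := by
    unfold spiralAngle
    exact ((Real.continuousOn_log.div_const _).sub continuousOn_const).neg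
  refine (continuousOn_twist hθ).comp (continuous_conj.comp_continuousOn
    (continuousOn_f0Inv.mono fun u hu => hu.2)) fun u hu => ?_
  simpa using (one_pos.trans (one_lt_norm_f0Inv hu)).ne'

lemma isOpen_gfun_image_XiInt : IsOpen (gfun '' XiInt) := by
  rw [gfun_image_XiInt]
  refine continuousOn_untwist.isOpen_inter_preimage ?_ isOpen_slitPlane
  exact (isOpen_lt continuous_const continuous_im).sdiff isClosed_singleton

lemma continuousOn_gInv : ContinuousOn gInv (gfun '' XiInt) := by
  rw [gfun_image_XiInt]
  refine ContinuousOn.comp (by unfold ofStrip; fun_prop) ?_ (mapsTo_univ _ _)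
  intro u hu
  exact ((continuousAt_clog hu.2).comp_continuousWithinAt
    (continuousOn_untwist.mono inter_subset_left u hu))

lemma mapsTo_gInv_gfun_image : MapsTo gInv (gfun '' XiInt) XiInt := by
  rintro _ ⟨p, hp, rfl⟩
  rwa [gInv_gfun (XiInt_subset_Xi hp)]

noncomputable def gfunHomeomorph : XiInt ≃ₜ gfun '' XiInt where
  toFun := (mapsTo_image gfun XiInt).restrict
  invFun := mapsTo_gInv_gfun_image.restrict
  left_inv p := Subtype.ext (gInv_gfun (XiInt_subset_Xi p.2))
  right_inv u := Subtype.ext (gfun_gInv (mapsTo_gfun.image_subset (image_mono XiInt_subset_Xi u.2)))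
  continuous_toFun := (continuousOn_gfun.mono XiInt_subset_Xi).mapsToRestrict _
  continuous_invFun := continuousOn_gInv.mapsToRestrict _

lemma coe_gfunHomeomorph (p : XiInt) : (gfunHomeomorph p : ℂ) = gfun p := rfl

lemma convex_XiInt : Convex ℝ XiInt := by
  have : XiInt = LinearMap.fst ℝ ℝ ℝ ⁻¹' Ioo (-(3 * Real.pi / 2)) (Real.pi / 2) ∩
      (LinearMap.fst ℝ ℝ ℝ + LinearMap.snd ℝ ℝ ℝ) ⁻¹' Iio 0 := by
    ext p
    simp only [XiInt, mem_ofPred_eq, mem_inter_iff, mem_preimage, mem_Ioo, mem_Iio,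
      LinearMap.add_apply, LinearMap.fst_apply, LinearMap.snd_apply]
    constructor
    · rintro ⟨h1, h2, h3⟩; exact ⟨⟨h1, h2⟩, by linarith⟩
    · rintro ⟨⟨h1, h2⟩, h3⟩; exact ⟨h1, h2, by linarith⟩
  rw [this]
  exact ((convex_Ioo _ _).linear_preimage _).inter ((convex_Iio _).linear_preimage _)

lemma XiInt_nonempty : XiInt.Nonempty :=
  ⟨(0, -1), by linarith [Real.pi_pos], by linarith [Real.pi_pos], by norm_num⟩

/-- `g = f₀ ∘ h` is a continuous bijection from `Ξ` onto `ℂ₊ \ {u₀}`, mapping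
the interior of `Ξ` homeomorphically onto `ℂ₊ \ (Γ_{π/2} ∪ {u₀})`, which is an open, simply
connected subset of `ℂ`. -/
theorem gfun_continuous_bijective_homeo :
    ContinuousOn gfun Xi ∧
    Set.BijOn gfun Xi ({u : ℂ | 0 < u.im} \ {u0}) ∧
    IsOpen ({u : ℂ | 0 < u.im} \ (GammaHalfPi ∪ {u0})) ∧
    SimplyConnectedSpace ({u : ℂ | 0 < u.im} \ (GammaHalfPi ∪ {u0}) : Set ℂ) ∧
    ∃ e : XiInt ≃ₜ ({u : ℂ | 0 < u.im} \ (GammaHalfPi ∪ {u0}) : Set ℂ),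
      ∀ p : XiInt, (e p : ℂ) = gfun (p : ℝ × ℝ) := by
  rw [upperHalfPlane_diff_eq_gfun_image_XiInt]
  have : ContractibleSpace XiInt := convex_XiInt.contractibleSpace XiInt_nonempty
  have : ContractibleSpace (gfun '' XiInt) := gfunHomeomorph.symm.contractibleSpace
  exact ⟨continuousOn_gfun, bijOn_gfun, isOpen_gfun_image_XiInt, inferInstance,
    gfunHomeomorph, coe_gfunHomeomorph⟩
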